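/- For all 0 < k < 2, J > 0 and M > 0 there exists a constant a ∈ (0,1), depending only on k, M and J, such that 𝓔(f,φ) ≥ aM for every admissible pair (f,φ). In particular the energy infimum is strictly positive: I^k_{M,J} > 0. -/

import Mathlib

open MeasureTheory Real Filter Topology
open scoped ENNReal

noncomputable section

/-- Euclidean 3-space. -/
abbrev E3 := EuclideanSpace ℝ (Fin 3)

/-- `φ` belongs to (a C¹ surrogate of) the space `D¹(ℝ³)`: it is continuously
differentiable, its gradient is square integrable and it vanishes at infinity in
the sense that `{|φ| > a}` has finite measure for every `a > 0`. -/
def IsPotential (φ : E3 → ℝ) : Prop :=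
  ContDiff ℝ 1 φ ∧ (∫⁻ x : E3, ENNReal.ofReal (‖gradient φ x‖ ^ 2)) < ⊤ ∧
    ∀ a : ℝ, 0 < a → volume {x : E3 | a < |φ x|} < ⊤

/-- `f ∈ Γ^k_{M,J}`: `f` is measurable, a.e. nonnegative, with `‖f‖_{L¹} = M` and
`‖f‖_{L^{1+1/k}} ≤ J` (in particular `f ∈ L¹ ∩ L^{1+1/k}`). -/
def InGamma (k M J : ℝ) (f : E3 → E3 → ℝ) : Prop :=
  Measurable (Function.uncurry f) ∧
  (∀ᵐ z : E3 × E3, 0 ≤ f z.1 z.2) ∧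
  (∫⁻ z : E3 × E3, ENNReal.ofReal (f z.1 z.2)) = ENNReal.ofReal M ∧
  eLpNorm (Function.uncurry f) (ENNReal.ofReal (1 + 1/k)) volume ≤ ENNReal.ofReal J

/-- Kinetic energy `E_kin(f,φ) = ∫∫ √(e^{2φ(x)}+|p|²) f(x,p) dp dx` (value in `[0,∞]`). -/
def kinE (f : E3 → E3 → ℝ) (φ : E3 → ℝ) : ℝ≥0∞ :=
  ∫⁻ z : E3 × E3, ENNReal.ofReal (Real.sqrt (Real.exp (2 * φ z.1) + ‖z.2‖ ^ 2) * f z.1 z.2)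

/-- Energy functional `𝓔(f,φ) = E_kin(f,φ) + (1/2)∫ |∇φ|²` (value in `[0,∞]`). -/
def energy (f : E3 → E3 → ℝ) (φ : E3 → ℝ) : ℝ≥0∞ :=
  kinE f φ + (∫⁻ x : E3, ENNReal.ofReal (‖gradient φ x‖ ^ 2)) / 2

/-- `(f,φ)` is admissible: `f ∈ Γ^k_{M,J}`, `φ` is a potential and
`∫∫ √(1+|p|²) f dp dx < ∞`. -/
def Admissible (k M J : ℝ) (f : E3 → E3 → ℝ) (φ : E3 → ℝ) : Prop :=
  InGamma k M J f ∧ IsPotential φ ∧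
  (∫⁻ z : E3 × E3, ENNReal.ofReal (Real.sqrt (1 + ‖z.2‖ ^ 2) * f z.1 z.2)) < ⊤

/-- The energy infimum `I^k_{M,J} = inf {𝓔(f,φ) : (f,φ) admissible}`. -/
def energyInf (k M J : ℝ) : ℝ≥0∞ :=
  sInf { e : ℝ≥0∞ | ∃ f φ, Admissible k M J f φ ∧ e = energy f φ }

/-!
Where `φ ≥ -1` the kinetic weight `√(e^{2φ} + |p|²)` is at least `e⁻¹`, and where `|p| ≥ R` it
is at least `R`; on these regions the mass of `f` is controlled by the kinetic energy. On the
remaining region `{φ < -1} × {|p| ≤ R}` Hölder's inequality with `f ∈ L^{1+1/k}` bounds the mass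
by a power of its volume, and `|{φ < -1}| ≲ ‖∇φ‖₂⁶` by the Gagliardo–Nirenberg–Sobolev
inequality applied to a cutoff of `φ` that is `1` on `{φ < -1}` and `0` on `{φ ≥ -1/2}`. This
cutoff is made compactly supported by a radial cutoff at radius `r`, whose gradient lives on
`{φ < -1/2} \ B_r`; that set has finite measure because `φ` vanishes at infinity, so its
contribution disappears as `r → ∞`. If the energy were below `s²`, the choice `R = 1/s` would bound `M` by a
quantity tending to `0` with `s`.
-/

open Set Metric Module
open scoped NNReal

structure IsSmoothStep (χ : ℝ → ℝ) (K : ℝ≥0) (a b : ℝ) : Prop where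
  contDiff : ContDiff ℝ 1 χ
  lipschitzWith : LipschitzWith K χ
  eq_one : ∀ t ≤ a, χ t = 1
  eq_zero : ∀ t, b ≤ t → χ t = 0
  mem_Icc : ∀ t, χ t ∈ Icc 0 1

lemma Real.smoothTransition.exists_lipschitzWith : ∃ K, LipschitzWith K smoothTransition := by
  obtain ⟨K, hK⟩ := (smoothTransition.contDiff (n := 1)).locallyLipschitz.locallyLipschitzOn
    |>.exists_lipschitzOnWith_of_compact (isCompact_Icc (a := (0 : ℝ)) (b := 1))
  have hproj := LipschitzWith.subtype_val _ |>.comp (LipschitzWith.projIcc zero_le_one)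
  refine ⟨K * (1 * 1), lipschitzOnWith_univ.mp ?_⟩
  have := hK.comp (hproj.lipschitzOnWith (s := univ)) fun x _ => (projIcc 0 1 zero_le_one x).2
  simpa only [Function.comp_def, smoothTransition.projIcc] using this

lemma exists_isSmoothStep {a b : ℝ} (hab : a < b) : ∃ χ K, IsSmoothStep χ K a b := by
  obtain ⟨K, hK⟩ := smoothTransition.exists_lipschitzWith
  have hba : 0 < b - a := sub_pos.mpr hab
  refine ⟨fun t => smoothTransition ((b - a)⁻¹ * (b - t)), _,
    smoothTransition.contDiff.comp (by fun_prop),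
    hK.comp <| (lipschitzWith_smul (b - a)⁻¹).comp (IsometryEquiv.subLeft b).isometry.lipschitz,
    fun t ht => smoothTransition.one_of_one_le ?_, fun t ht => smoothTransition.zero_of_nonpos ?_,
    fun t => ⟨smoothTransition.nonneg _, smoothTransition.le_one _⟩⟩
  · rw [inv_mul_eq_div, one_le_div hba]
    linarith
  · exact mul_nonpos_of_nonneg_of_nonpos (inv_nonneg.mpr hba.le) (by linarith)

section Cutoff

variable {E : Type*} [NormedAddCommGroup E] {χ ρ : ℝ → ℝ} {Kχ Kρ : ℝ≥0} {a b c r : ℝ}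
  {φ : E → ℝ}

lemma IsSmoothStep.comp_norm_sub_eventuallyEq_one (hρ : IsSmoothStep ρ Kρ 0 c) {x : E}
    (hx : ‖x‖ < r) : (fun y : E => ρ (‖y‖ - r)) =ᶠ[𝓝 x] fun _ => 1 := by
  filter_upwards [(isOpen_lt continuous_norm continuous_const).mem_nhds hx] with y hy
  exact hρ.eq_one _ (by linarith [show ‖y‖ < r from hy])

lemma IsSmoothStep.norm_fderiv_comp_norm_sub_le [NormedSpace ℝ E] (hρ : IsSmoothStep ρ Kρ a b)
    (x : E) : ‖fderiv ℝ (fun y : E => ρ (‖y‖ - r)) x‖ ≤ Kρ := by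
  have := hρ.lipschitzWith.comp
    ((IsometryEquiv.subRight r).isometry.lipschitz.comp (lipschitzWith_one_norm (E := E)))
  rw [mul_one, mul_one] at this
  exact norm_fderiv_le_of_lipschitz ℝ this

lemma IsSmoothStep.norm_fderiv_comp_le [NormedSpace ℝ E] (hχ : IsSmoothStep χ Kχ a b)
    (hφ : ContDiff ℝ 1 φ) (x : E) : ‖fderiv ℝ (fun y => χ (φ y)) x‖ ≤ Kχ * ‖fderiv ℝ φ x‖ := by
  rw [fderiv_fun_comp x (hχ.contDiff.differentiable one_ne_zero _)
    (hφ.differentiable one_ne_zero x)]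
  exact (ContinuousLinearMap.opNorm_comp_le _ _).trans
    (by gcongr; exact norm_fderiv_le_of_lipschitz ℝ hχ.lipschitzWith)

def sublevelCutoff (χ ρ : ℝ → ℝ) (φ : E → ℝ) (r : ℝ) : E → ℝ :=
  fun x => ρ (‖x‖ - r) * χ (φ x)

lemma hasCompactSupport_sublevelCutoff [ProperSpace E] (hρ : IsSmoothStep ρ Kρ a b) :
    HasCompactSupport (sublevelCutoff χ ρ φ r) :=
  HasCompactSupport.intro (isCompact_closedBall 0 (r + b)) fun x hx => by
    rw [mem_closedBall_zero_iff, not_le] at hx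
    simp [sublevelCutoff, hρ.eq_zero _ (by linarith : b ≤ ‖x‖ - r)]

lemma indicator_le_sublevelCutoff (hχ : IsSmoothStep χ Kχ a b) (hρ : IsSmoothStep ρ Kρ 0 c)
    (x : E) :
    ({x | φ x < a} ∩ ball 0 r).indicator (fun _ => (1 : ℝ)) x ≤ sublevelCutoff χ ρ φ r x := by
  by_cases hx : x ∈ {x | φ x < a} ∩ ball 0 r
  · rw [indicator_of_mem hx, sublevelCutoff, hχ.eq_one _ hx.1.le,
      hρ.eq_one _ (by linarith [mem_ball_zero_iff.mp hx.2]), one_mul]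
  · rw [indicator_of_notMem hx]
    exact mul_nonneg (hρ.mem_Icc _).1 (hχ.mem_Icc _).1

end Cutoff

section Sobolev

variable {E : Type*} [NormedAddCommGroup E] [InnerProductSpace ℝ E] {χ ρ : ℝ → ℝ}
  {Kχ Kρ : ℝ≥0} {a b c r : ℝ} {φ : E → ℝ}

lemma IsSmoothStep.contDiff_comp_norm_sub (hρ : IsSmoothStep ρ Kρ 0 c) (hr : 0 < r) :
    ContDiff ℝ 1 fun x : E => ρ (‖x‖ - r) := by
  refine contDiff_iff_contDiffAt.mpr fun x => ?_
  rcases eq_or_ne x 0 with rfl | hx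
  · exact contDiffAt_const.congr_of_eventuallyEq
      (hρ.comp_norm_sub_eventuallyEq_one (by simpa using hr))
  · exact hρ.contDiff.contDiffAt.comp x ((contDiffAt_norm ℝ hx).sub contDiffAt_const)

lemma contDiff_sublevelCutoff (hχ : IsSmoothStep χ Kχ a b) (hρ : IsSmoothStep ρ Kρ 0 c)
    (hφ : ContDiff ℝ 1 φ) (hr : 0 < r) : ContDiff ℝ 1 (sublevelCutoff χ ρ φ r) :=
  (hρ.contDiff_comp_norm_sub hr).mul (hχ.contDiff.comp hφ)

lemma norm_fderiv_sublevelCutoff_le (hχ : IsSmoothStep χ Kχ a b) (hρ : IsSmoothStep ρ Kρ 0 c)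
    (hφ : ContDiff ℝ 1 φ) (hr : 0 < r) (x : E) :
    ‖fderiv ℝ (sublevelCutoff χ ρ φ r) x‖ ≤
      ({x | φ x < b} \ ball 0 r).indicator (fun _ => (Kρ : ℝ)) x + Kχ * ‖fderiv ℝ φ x‖ := by
  have hradial : |χ (φ x)| * ‖fderiv ℝ (fun y : E => ρ (‖y‖ - r)) x‖ ≤
      ({x | φ x < b} \ ball 0 r).indicator (fun _ => (Kρ : ℝ)) x := by
    by_cases hb : φ x < b
    · by_cases hx : x ∈ ball (0 : E) r
      · rw [(hρ.comp_norm_sub_eventuallyEq_one (mem_ball_zero_iff.mp hx)).fderiv_eq]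
        simp [indicator_of_notMem (fun h : x ∈ {x | φ x < b} \ ball 0 r => h.2 hx)]
      · rw [indicator_of_mem (show x ∈ {x | φ x < b} \ ball 0 r from ⟨hb, hx⟩),
          abs_of_nonneg (hχ.mem_Icc _).1]
        exact (mul_le_mul (hχ.mem_Icc _).2 (hρ.norm_fderiv_comp_norm_sub_le x) (norm_nonneg _)
          zero_le_one).trans_eq (one_mul _)
    · rw [hχ.eq_zero _ (not_lt.mp hb), abs_zero, zero_mul]
      exact indicator_nonneg (fun _ _ => Kρ.coe_nonneg) x
  have hlevel : |ρ (‖x‖ - r)| * ‖fderiv ℝ (fun y => χ (φ y)) x‖ ≤ Kχ * ‖fderiv ℝ φ x‖ := by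
    rw [abs_of_nonneg (hρ.mem_Icc _).1]
    exact mul_le_of_le_one_left (norm_nonneg _) (hρ.mem_Icc _).2 |>.trans
      (hχ.norm_fderiv_comp_le hφ x)
  unfold sublevelCutoff
  rw [fderiv_fun_mul (d := fun y => χ (φ y))
    ((hρ.contDiff_comp_norm_sub hr).differentiable one_ne_zero x)
    ((hχ.contDiff.comp hφ).differentiable one_ne_zero x), add_comm]
  refine (norm_add_le _ _).trans ?_
  rw [norm_smul, norm_smul, Real.norm_eq_abs, Real.norm_eq_abs]
  exact add_le_add hradial hlevel

variable [FiniteDimensional ℝ E] [MeasurableSpace E] [BorelSpace E] (μ : Measure E)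
  [μ.IsAddHaarMeasure] {p p' : ℝ≥0}

lemma measure_sublevel_inter_ball_rpow_le (hχ : IsSmoothStep χ Kχ a b)
    (hρ : IsSmoothStep ρ Kρ 0 c) (hφ : ContDiff ℝ 1 φ) (hr : 0 < r) (hp : 1 ≤ p)
    (hpn : (p : ℝ) < finrank ℝ E) (hp' : (p' : ℝ)⁻¹ = p⁻¹ - (finrank ℝ E : ℝ)⁻¹) :
    μ ({x | φ x < a} ∩ ball 0 r) ^ (1 / (p' : ℝ)) ≤
      eLpNormLESNormFDerivOfEqInnerConst μ p *
        (Kρ * μ ({x | φ x < b} \ ball 0 r) ^ (1 / (p : ℝ)) + Kχ * eLpNorm (fderiv ℝ φ) p μ) := by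
  have hn : 0 < finrank ℝ E := by
    have : (1 : ℝ) ≤ p := by exact_mod_cast hp
    exact_mod_cast zero_lt_one.trans_le this |>.trans hpn
  have hp'0 : p' ≠ 0 := by
    rintro rfl
    exact hpn.ne (by simpa [sub_eq_zero, eq_comm, inv_inj] using hp')
  have hφa : MeasurableSet ({x | φ x < a} ∩ ball 0 r) :=
    (measurableSet_lt hφ.continuous.measurable measurable_const).inter measurableSet_ball
  have hφb : MeasurableSet ({x | φ x < b} \ ball 0 r) :=
    (measurableSet_lt hφ.continuous.measurable measurable_const).diff measurableSet_ball
  have hdφ : Continuous fun x => ‖fderiv ℝ φ x‖ := (hφ.continuous_fderiv one_ne_zero).norm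
  calc μ ({x | φ x < a} ∩ ball 0 r) ^ (1 / (p' : ℝ))
      = eLpNorm (({x | φ x < a} ∩ ball 0 r).indicator fun _ => (1 : ℝ)) p' μ := by
        rw [eLpNorm_indicator_const hφa (by exact_mod_cast hp'0) ENNReal.coe_ne_top]
        simp
    _ ≤ eLpNorm (sublevelCutoff χ ρ φ r) p' μ := by
        refine eLpNorm_mono_real fun x => ?_
        rw [Real.norm_eq_abs, abs_of_nonneg (indicator_nonneg (fun _ _ => zero_le_one) x)]
        exact indicator_le_sublevelCutoff hχ hρ x
    _ ≤ eLpNormLESNormFDerivOfEqInnerConst μ p *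
          eLpNorm (fderiv ℝ (sublevelCutoff χ ρ φ r)) p μ :=
        eLpNorm_le_eLpNorm_fderiv_of_eq_inner μ (contDiff_sublevelCutoff hχ hρ hφ hr)
          (hasCompactSupport_sublevelCutoff hρ) hp hn hp'
    _ ≤ eLpNormLESNormFDerivOfEqInnerConst μ p *
          eLpNorm (({x | φ x < b} \ ball 0 r).indicator (fun _ => (Kρ : ℝ)) +
            (Kχ : ℝ) • fun x => ‖fderiv ℝ φ x‖) p μ := by
        gcongr 1
        exact eLpNorm_mono_real (norm_fderiv_sublevelCutoff_le hχ hρ hφ hr)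
    _ ≤ _ := by
        gcongr 1
        refine (eLpNorm_add_le (aestronglyMeasurable_const.indicator hφb)
          (hdφ.const_smul _).aestronglyMeasurable (by exact_mod_cast hp)).trans_eq ?_
        rw [eLpNorm_indicator_const hφb (by positivity) ENNReal.coe_ne_top, eLpNorm_const_smul,
          eLpNorm_norm]
        simp

end Sobolev

section Exhaustion

variable {X : Type*} [PseudoMetricSpace X] [MeasurableSpace X] (μ : Measure X) (x : X)

lemma tendsto_measure_inter_ball_nat_succ (s : Set X) :
    Tendsto (fun n : ℕ => μ (s ∩ ball x (n + 1))) atTop (𝓝 (μ s)) := by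
  have := tendsto_measure_iUnion_atTop (μ := μ) (s := fun n : ℕ => s ∩ ball x (n + 1))
    fun m n hmn => inter_subset_inter_right _ (ball_subset_ball (by gcongr))
  rwa [← inter_iUnion, iUnion_ball_nat_succ, inter_univ] at this

lemma tendsto_measure_sdiff_ball_nat_succ [OpensMeasurableSpace X] {s : Set X}
    (hs : NullMeasurableSet s μ) (hμs : μ s ≠ ∞) :
    Tendsto (fun n : ℕ => μ (s \ ball x (n + 1))) atTop (𝓝 0) := by
  have := tendsto_measure_iInter_atTop (μ := μ) (s := fun n : ℕ => s \ ball x (n + 1))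
    (fun n => hs.diff measurableSet_ball.nullMeasurableSet)
    (fun m n hmn => sdiff_subset_sdiff_right (ball_subset_ball (by gcongr)))
    ⟨0, ne_top_of_le_ne_top hμs (measure_mono sdiff_subset)⟩
  rwa [← sdiff_iUnion, iUnion_ball_nat_succ, sdiff_univ, measure_empty] at this

end Exhaustion

theorem exists_measure_sublevel_rpow_le_eLpNorm_fderiv {E : Type*} [NormedAddCommGroup E]
    [InnerProductSpace ℝ E] [FiniteDimensional ℝ E] [MeasurableSpace E] [BorelSpace E]
    (μ : Measure E) [μ.IsAddHaarMeasure] {a b : ℝ} (hab : a < b) {p p' : ℝ≥0} (hp : 1 ≤ p)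
    (hpn : (p : ℝ) < finrank ℝ E) (hp' : (p' : ℝ)⁻¹ = p⁻¹ - (finrank ℝ E : ℝ)⁻¹) :
    ∃ C : ℝ≥0, ∀ φ : E → ℝ, ContDiff ℝ 1 φ → μ {x | φ x < b} ≠ ∞ →
      μ {x | φ x < a} ^ (1 / (p' : ℝ)) ≤ C * eLpNorm (fderiv ℝ φ) p μ := by
  obtain ⟨χ, Kχ, hχ⟩ := exists_isSmoothStep hab
  obtain ⟨ρ, Kρ, hρ⟩ := exists_isSmoothStep (zero_lt_one (α := ℝ))
  set C := eLpNormLESNormFDerivOfEqInnerConst μ p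
  refine ⟨C * Kχ, fun φ hφ hb => le_of_tendsto_of_tendsto'
    ((ENNReal.continuous_rpow_const.tendsto _).comp
      (tendsto_measure_inter_ball_nat_succ μ 0 {x | φ x < a})) ?_
    fun n => measure_sublevel_inter_ball_rpow_le μ hχ hρ hφ n.cast_add_one_pos hp hpn hp'⟩
  have htail := tendsto_measure_sdiff_ball_nat_succ μ 0
    (measurableSet_lt hφ.continuous.measurable measurable_const).nullMeasurableSet hb
  have hradial := ENNReal.Tendsto.const_mul (a := (Kρ : ℝ≥0∞))
    (((ENNReal.continuous_rpow_const (y := 1 / (p : ℝ))).tendsto 0).comp htail)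
    (Or.inr ENNReal.coe_ne_top)
  have := ENNReal.Tendsto.const_mul (a := (C : ℝ≥0∞))
    (hradial.add_const (Kχ * eLpNorm (fderiv ℝ φ) p μ)) (Or.inr ENNReal.coe_ne_top)
  rwa [ENNReal.zero_rpow_of_pos (one_div_pos.mpr (by positivity)), mul_zero, zero_add,
    ← mul_assoc, ← ENNReal.coe_mul] at this

section LebesgueBounds

variable {α : Type*} [MeasurableSpace α] {μ : Measure α}

lemma const_mul_setLIntegral_le_lintegral_mul {F w : α → ℝ≥0∞} {s : Set α} {c : ℝ≥0∞}
    (hs : MeasurableSet s) (hw : ∀ z ∈ s, c ≤ w z) :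
    c * ∫⁻ z in s, F z ∂μ ≤ ∫⁻ z, w z * F z ∂μ :=
  calc c * ∫⁻ z in s, F z ∂μ ≤ ∫⁻ z in s, c * F z ∂μ := lintegral_const_mul_le c F
    _ ≤ ∫⁻ z in s, w z * F z ∂μ := setLIntegral_mono' hs fun z hz => by gcongr; exact hw z hz
    _ ≤ ∫⁻ z, w z * F z ∂μ := setLIntegral_le_lintegral s _

lemma setLIntegral_le_eLpNorm_mul_measure_rpow {F : α → ℝ≥0∞} (hF : AEMeasurable F μ)
    {q : ℝ≥0∞} (hq : 1 ≤ q) (s : Set α) :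
    ∫⁻ z in s, F z ∂μ ≤ eLpNorm F q μ * μ s ^ (1 - 1 / q.toReal) :=
  calc ∫⁻ z in s, F z ∂μ = eLpNorm F 1 (μ.restrict s) := by
        simp only [eLpNorm_one_eq_lintegral_enorm, enorm_eq_self]
    _ ≤ eLpNorm F q (μ.restrict s) * μ.restrict s univ ^ (1 / (1 : ℝ≥0∞).toReal - 1 / q.toReal) :=
        eLpNorm_le_eLpNorm_mul_rpow_measure_univ hq hF.restrict.aestronglyMeasurable
    _ ≤ eLpNorm F q μ * μ s ^ (1 - 1 / q.toReal) := by
        rw [Measure.restrict_apply_univ, ENNReal.toReal_one, div_one]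
        gcongr
        exact Measure.restrict_le_self

end LebesgueBounds

lemma eLpNorm_fderiv_two_eq_lintegral_gradient {E : Type*} [NormedAddCommGroup E]
    [InnerProductSpace ℝ E] [CompleteSpace E] [MeasurableSpace E] (μ : Measure E) (φ : E → ℝ) :
    eLpNorm (fderiv ℝ φ) 2 μ = (∫⁻ x, ENNReal.ofReal (‖gradient φ x‖ ^ 2) ∂μ) ^ (1 / 2 : ℝ) := by
  rw [eLpNorm_eq_lintegral_rpow_enorm_toReal two_ne_zero ENNReal.ofNat_ne_top]
  congr 2 with x
  rw [gradient, LinearIsometryEquiv.norm_map, ← ofReal_norm, ENNReal.toReal_ofNat,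
    ENNReal.rpow_two, ENNReal.ofReal_pow (norm_nonneg _)]

lemma exists_volume_lt_neg_one_le :
    ∃ C : ℝ≥0∞, C ≠ ∞ ∧ ∀ φ : E3 → ℝ, IsPotential φ →
      volume {x | φ x < -1} ≤ C * (∫⁻ x, ENNReal.ofReal (‖gradient φ x‖ ^ 2)) ^ 3 := by
  obtain ⟨C, hC⟩ := exists_measure_sublevel_rpow_le_eLpNorm_fderiv (volume : Measure E3)
    (a := -1) (b := -1 / 2) (p := 2) (p' := 6) (by norm_num) one_le_two
    (by simp; norm_num) (by simp; norm_num)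
  refine ⟨C ^ 6, by simp, fun φ hφ => ?_⟩
  have hb : volume {x | φ x < -1 / 2} ≠ ∞ :=
    ne_top_of_le_ne_top (hφ.2.2 (1 / 2) one_half_pos).ne <|
      measure_mono fun x (hx : φ x < -1 / 2) =>
        show 1 / 2 < |φ x| by rw [abs_of_neg (by linarith)]; linarith
  have h := hC φ hφ.1 hb
  rw [NNReal.coe_ofNat, ENNReal.coe_ofNat, eLpNorm_fderiv_two_eq_lintegral_gradient] at h
  calc volume {x | φ x < -1} = (volume {x | φ x < -1} ^ (1 / 6 : ℝ)) ^ 6 := by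
        rw [← ENNReal.rpow_natCast, ← ENNReal.rpow_mul]; norm_num
    _ ≤ (C * (∫⁻ x, ENNReal.ofReal (‖gradient φ x‖ ^ 2)) ^ (1 / 2 : ℝ)) ^ 6 := by gcongr
    _ = C ^ 6 * (∫⁻ x, ENNReal.ofReal (‖gradient φ x‖ ^ 2)) ^ 3 := by
        rw [mul_pow, ← ENNReal.rpow_mul_natCast]
        norm_num

lemma exp_le_sqrt_exp_two_mul_add_sq (t y : ℝ) : exp t ≤ √(exp (2 * t) + y ^ 2) :=
  le_sqrt_of_sq_le <| by rw [← exp_nat_mul]; push_cast; exact le_add_of_nonneg_right (sq_nonneg y)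

lemma le_sqrt_exp_two_mul_add_sq (t y : ℝ) : y ≤ √(exp (2 * t) + y ^ 2) :=
  le_sqrt_of_sq_le <| le_add_of_nonneg_left (exp_pos _).le

section PhaseSpace

variable {k M J : ℝ} {f : E3 → E3 → ℝ} {φ : E3 → ℝ}

lemma setLIntegral_le_kinE_div {s : Set (E3 × E3)} {c : ℝ} (hs : MeasurableSet s) (hc : 0 < c)
    (hcs : ∀ z ∈ s, c ≤ √(exp (2 * φ z.1) + ‖z.2‖ ^ 2)) :
    ∫⁻ z in s, ENNReal.ofReal (f z.1 z.2) ≤ kinE f φ / ENNReal.ofReal c := by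
  rw [ENNReal.le_div_iff_mul_le (Or.inl (by positivity)) (Or.inl ENNReal.ofReal_ne_top),
    mul_comm, kinE]
  simp_rw [ENNReal.ofReal_mul (sqrt_nonneg _)]
  exact const_mul_setLIntegral_le_lintegral_mul hs fun z hz => ENNReal.ofReal_le_ofReal (hcs z hz)

lemma InGamma.setLIntegral_le (hk : 0 < k) (hf : InGamma k M J f) (s : Set (E3 × E3)) :
    ∫⁻ z in s, ENNReal.ofReal (f z.1 z.2) ≤ ENNReal.ofReal J * volume s ^ (1 + k)⁻¹ := by
  obtain ⟨hfm, hf0, -, hfJ⟩ := hf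
  have hq : 1 ≤ ENNReal.ofReal (1 + 1 / k) := by
    rw [← ENNReal.ofReal_one]; exact ENNReal.ofReal_le_ofReal (by simp; positivity)
  have hexp : 1 - 1 / (ENNReal.ofReal (1 + 1 / k)).toReal = (1 + k)⁻¹ := by
    rw [ENNReal.toReal_ofReal (by positivity)]; field_simp; ring
  refine (setLIntegral_le_eLpNorm_mul_measure_rpow
    (ENNReal.measurable_ofReal.comp hfm).aemeasurable hq s).trans ?_
  rw [hexp]
  gcongr
  refine le_of_eq_of_le (eLpNorm_congr_enorm_ae ?_) hfJ
  filter_upwards [hf0] with z hz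
  rw [Function.comp_apply, enorm_eq_self]
  exact (enorm_of_nonneg hz).symm

lemma InGamma.ofReal_le_kinE_div_add (hk : 0 < k) (hf : InGamma k M J f) (hφ : Continuous φ)
    {R : ℝ} (hR : 0 < R) :
    ENNReal.ofReal M ≤ kinE f φ / ENNReal.ofReal (exp (-1)) +
      ENNReal.ofReal J * (volume {x | φ x < -1} * volume (closedBall (0 : E3) R)) ^ (1 + k)⁻¹ +
      kinE f φ / ENNReal.ofReal R := by
  have hcover : univ ⊆ {z : E3 × E3 | -1 ≤ φ z.1} ∪ {x | φ x < -1} ×ˢ closedBall 0 R ∪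
      {z | R ≤ ‖z.2‖} := fun z _ => by
    by_cases hlow : -1 ≤ φ z.1
    · exact Or.inl (Or.inl hlow)
    by_cases hslow : ‖z.2‖ ≤ R
    · exact Or.inl (Or.inr ⟨not_le.mp hlow, mem_closedBall_zero_iff.mpr hslow⟩)
    · exact Or.inr (not_le.mp hslow).le
  have hdeep := hf.setLIntegral_le hk ({x | φ x < -1} ×ˢ closedBall (0 : E3) R)
  rw [show volume ({x | φ x < -1} ×ˢ closedBall (0 : E3) R) = _ from Measure.prod_prod _ _]
    at hdeep
  calc ENNReal.ofReal M = ∫⁻ z in univ, ENNReal.ofReal (f z.1 z.2) := by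
        rw [Measure.restrict_univ, hf.2.2.1]
    _ ≤ _ := (lintegral_mono_set hcover).trans <| (lintegral_union_le _ _ _).trans <|
        add_le_add (lintegral_union_le _ _ _) le_rfl
    _ ≤ _ := by
        gcongr
        · exact setLIntegral_le_kinE_div
            (measurableSet_le measurable_const (hφ.measurable.comp measurable_fst)) (exp_pos _)
            fun z (hz : -1 ≤ φ z.1) =>
              (exp_le_exp.mpr hz).trans (exp_le_sqrt_exp_two_mul_add_sq _ _)
        · exact setLIntegral_le_kinE_div (measurableSet_le measurable_const measurable_snd.norm)
            hR fun z (hz : R ≤ ‖z.2‖) => hz.trans (le_sqrt_exp_two_mul_add_sq _ _)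

end PhaseSpace

lemma volume_mul_volume_closedBall_inv_le {S : Set E3} {C D : ℝ≥0∞} {s : ℝ} (hs : 0 < s)
    (hC : C ≠ ∞) (hS : volume S ≤ C * D ^ 3) (hD : D ≤ ENNReal.ofReal (2 * s ^ 2)) :
    volume S * volume (closedBall (0 : E3) s⁻¹) ≤
      ENNReal.ofReal ((8 * C * volume (ball (0 : E3) 1)).toReal * s ^ 3) := by
  have hc : 8 * C * volume (ball (0 : E3) 1) ≠ ∞ :=
    ENNReal.mul_ne_top (ENNReal.mul_ne_top ENNReal.ofNat_ne_top hC) measure_ball_lt_top.ne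
  rw [Measure.addHaar_closedBall _ _ (inv_nonneg.mpr hs.le), finrank_euclideanSpace_fin,
    ENNReal.ofReal_mul ENNReal.toReal_nonneg, ENNReal.ofReal_toReal hc]
  calc _ ≤ C * ENNReal.ofReal (2 * s ^ 2) ^ 3 *
        (ENNReal.ofReal (s⁻¹ ^ 3) * volume (ball (0 : E3) 1)) := by
        gcongr; exact hS.trans (by gcongr)
    _ = C * ENNReal.ofReal ((2 * s ^ 2) ^ 3 * s⁻¹ ^ 3) * volume (ball (0 : E3) 1) := by
        rw [← ENNReal.ofReal_pow (by positivity), ENNReal.ofReal_mul (by positivity)]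
        ring
    _ = 8 * C * volume (ball (0 : E3) 1) * ENNReal.ofReal (s ^ 3) := by
        rw [show (2 * s ^ 2) ^ 3 * s⁻¹ ^ 3 = 8 * s ^ 3 by field_simp; ring,
          ENNReal.ofReal_mul (by norm_num), ENNReal.ofReal_ofNat]
        ring

/-- For an admissible pair with energy below `s²`, the three terms bound its mass in the regions
`{φ ≥ -1}`, `{φ < -1} × {|p| ≤ 1/s}` and `{|p| ≥ 1/s}` of phase space. -/
def massBound (k J c s : ℝ) : ℝ := exp 1 * s ^ 2 + J * (c * s ^ 3) ^ (1 + k)⁻¹ + s ^ 3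

lemma Admissible.le_massBound {k M J s : ℝ} {C : ℝ≥0∞} {f : E3 → E3 → ℝ} {φ : E3 → ℝ}
    (hadm : Admissible k M J f φ) (hk : 0 < k) (hJ : 0 ≤ J) (hs : 0 < s) (hC : C ≠ ∞)
    (hφ : volume {x | φ x < -1} ≤ C * (∫⁻ x, ENNReal.ofReal (‖gradient φ x‖ ^ 2)) ^ 3)
    (henergy : energy f φ < ENNReal.ofReal (s ^ 2)) :
    M ≤ massBound k J (8 * C * volume (ball (0 : E3) 1)).toReal s := by
  obtain ⟨hf, hpot, -⟩ := hadm
  set c := (8 * C * volume (ball (0 : E3) 1)).toReal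
  have hK : kinE f φ ≤ ENNReal.ofReal (s ^ 2) := le_self_add.trans henergy.le
  have hD : ∫⁻ x, ENNReal.ofReal (‖gradient φ x‖ ^ 2) ≤ ENNReal.ofReal (2 * s ^ 2) := by
    have h := le_add_self.trans henergy.le
    rw [ENNReal.div_le_iff_le_mul (Or.inl two_ne_zero) (Or.inl ENNReal.ofNat_ne_top)] at h
    rwa [ENNReal.ofReal_mul zero_le_two, mul_comm, ENNReal.ofReal_ofNat]
  have hM : ENNReal.ofReal M ≤ ENNReal.ofReal (massBound k J c s) :=
    calc ENNReal.ofReal M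
        ≤ ENNReal.ofReal (s ^ 2) / ENNReal.ofReal (exp (-1)) +
          ENNReal.ofReal J * ENNReal.ofReal (c * s ^ 3) ^ (1 + k)⁻¹ +
          ENNReal.ofReal (s ^ 2) / ENNReal.ofReal s⁻¹ := by
          refine (hf.ofReal_le_kinE_div_add hk hpot.1.continuous (inv_pos.mpr hs)).trans ?_
          gcongr
          exact volume_mul_volume_closedBall_inv_le hs hC hφ hD
      _ = ENNReal.ofReal (massBound k J c s) := by
          rw [← ENNReal.ofReal_div_of_pos (exp_pos _),
            ← ENNReal.ofReal_div_of_pos (inv_pos.mpr hs),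
            ENNReal.ofReal_rpow_of_nonneg (by positivity) (by positivity),
            ← ENNReal.ofReal_mul hJ, ← ENNReal.ofReal_add (by positivity) (by positivity),
            ← ENNReal.ofReal_add (by positivity) (by positivity), massBound, exp_neg,
            div_inv_eq_mul, div_inv_eq_mul]
          ring_nf
  exact (ENNReal.ofReal_le_ofReal_iff (by unfold massBound; positivity)).mp hM

lemma exists_lt_massBound_lt {k M : ℝ} (hk : 0 < k) (hM : 0 < M) (J c : ℝ) :
    ∃ s, 0 < s ∧ s ^ 2 < M ∧ massBound k J c s < M := by
  have hcont : Continuous (massBound k J c) :=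
    ((continuous_const.mul (continuous_pow 2)).add (continuous_const.mul
      ((continuous_rpow_const (by positivity)).comp (continuous_const.mul (continuous_pow 3))))).add
      (continuous_pow 3)
  have hzero : massBound k J c 0 = 0 := by
    simp [massBound, zero_rpow (inv_pos.mpr (by linarith : 0 < 1 + k)).ne']
  have hsq : ∀ᶠ s in 𝓝 (0 : ℝ), s ^ 2 < M :=
    (continuous_pow 2).continuousAt.eventually_lt continuousAt_const (by simpa using hM)
  have hbound : ∀ᶠ s in 𝓝 (0 : ℝ), massBound k J c s < M :=
    hcont.continuousAt.eventually_lt continuousAt_const (by rwa [hzero])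
  exact (eventually_mem_nhdsWithin.and ((hsq.and hbound).filter_mono nhdsWithin_le_nhds)).exists
    (f := 𝓝[>] 0)

theorem energyInf_pos_general (k M J : ℝ) (hk : 0 < k) (hM : 0 < M) (hJ : 0 < J) :
    (∃ a : ℝ, 0 < a ∧ a < 1 ∧
      ∀ f φ, Admissible k M J f φ → ENNReal.ofReal (a * M) ≤ energy f φ)
    ∧ 0 < energyInf k M J := by
  obtain ⟨C, hC, hCφ⟩ := exists_volume_lt_neg_one_le
  obtain ⟨s, hs, hsM, hbound⟩ :=
    exists_lt_massBound_lt hk hM J (8 * C * volume (ball (0 : E3) 1)).toReal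
  have hlower : ∀ f φ, Admissible k M J f φ → ENNReal.ofReal (s ^ 2) ≤ energy f φ :=
    fun f φ hadm => not_lt.mp fun henergy =>
      (hadm.le_massBound hk hJ.le hs hC (hCφ φ hadm.2.1) henergy).not_gt hbound
  refine ⟨⟨s ^ 2 / M, by positivity, (div_lt_one hM).mpr hsM, fun f φ hadm => ?_⟩, ?_⟩
  · rw [div_mul_cancel₀ _ hM.ne']
    exact hlower f φ hadm
  · refine (ENNReal.ofReal_pos.mpr (pow_pos hs 2)).trans_le (le_sInf ?_)
    rintro _ ⟨f, φ, hadm, rfl⟩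
    exact hlower f φ hadm

/-- there is `a ∈ (0,1)`, depending only on `k, M, J`, with
`𝓔(f,φ) ≥ aM` for every admissible pair; in particular `I^k_{M,J} > 0`. -/
theorem energyInf_pos (k M J : ℝ) (hk : 0 < k) (hk2 : k < 2) (hM : 0 < M) (hJ : 0 < J) :
    (∃ a : ℝ, 0 < a ∧ a < 1 ∧
      ∀ f φ, Admissible k M J f φ → ENNReal.ofReal (a * M) ≤ energy f φ)
    ∧ 0 < energyInf k M J :=
  energyInf_pos_general k M J hk hM hJ
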